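/- Define q₃(x₅,x₆,x₇) = (x₅ + x₆ + x₇)x₇, q̄₂(x₅,x₆,x₇) = 2x₆x₇, and set q₂ = √2(q₃)_{x₇}x₄ + q̄₂, r₆ = 2(q₃)_{x₇}x₃ + 2(q₃)_{x₇x₇}x₄² + 2√2(q̄₂)_{x₇}x₄, r₇ = 2√2(q₃)_{x₇}x₄, r₅ = -(q₃)_{x₇}x₂ + √2(q₃)_{x₇x₇}x₃x₄ + (q̄₂)_{x₇}x₃ + (√2/3)(q₃)_{x₇x₇x₇}x₄³ + ((q̄₂)_{x₇x₇} - (q₃)_{x₆x₇})x₄² + (1/√2)(-0 - 0 + (q₃)_{x₅})x₄ (taking r̄₅ = r̄₆ = r̄₇ = 0). Then these equal the explicit polynomials q₂ = √2(x₅+x₆+2x₇)x₄ + 2x₆x₇, r₅ = -(x₅+x₆+2x₇)x₂ + 2√2 x₃x₄ + 2x₃x₆ - x₄² + (1/√2)x₄x₇, r₆ = 2(x₅+x₆+2x₇)x₃ + 4x₄² + 4√2 x₄x₆, r₇ = 2√2(x₅+x₆+2x₇)x₄, and they satisfy the differential system of Type I 4(b) with j=1: -2√2(r₅)_{x₂}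 = √2(r₆)_{x₃} = (r₇)_{x₄}, 2√2(r₅)_{x₃} = (r₆)_{x₄}, (r₆)_{x₃} = √2(q₂)_{x₄}, √2(r₅)_{x₄} = (r₆)_{x₇} - (r₇)_{x₆} + (q₃)_{x₅}, (r₆)_{x₄} = 2√2(q₂)_{x₇}, (r₇)_{x₄} = 2√2(q₃)_{x₇}. -/

import Mathlib

noncomputable section

/-- Partial derivative of `f` at `x` in the `i`-th coordinate direction. -/
def pd {n : ℕ} (i : Fin n) (f : (Fin n → ℝ) → ℝ) (x : Fin n → ℝ) : ℝ :=
  fderiv ℝ f x (Pi.single i 1)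

/- Coordinates on ℝ⁷: index i ↔ x_{i+1}. -/

def q₃16 (x : Fin 7 → ℝ) : ℝ := (x 4 + x 5 + x 6) * x 6
def q₂bar16 (x : Fin 7 → ℝ) : ℝ := 2 * x 5 * x 6

def q₂16 (x : Fin 7 → ℝ) : ℝ := Real.sqrt 2 * pd 6 q₃16 x * x 3 + q₂bar16 x
def r₆16 (x : Fin 7 → ℝ) : ℝ :=
  2 * pd 6 q₃16 x * x 2 + 2 * pd 6 (fun y => pd 6 q₃16 y) x * (x 3) ^ 2
    + 2 * Real.sqrt 2 * pd 6 q₂bar16 x * x 3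
def r₇16 (x : Fin 7 → ℝ) : ℝ := 2 * Real.sqrt 2 * pd 6 q₃16 x * x 3
def r₅16 (x : Fin 7 → ℝ) : ℝ :=
  -(pd 6 q₃16 x) * x 1 + Real.sqrt 2 * pd 6 (fun y => pd 6 q₃16 y) x * x 2 * x 3
    + pd 6 q₂bar16 x * x 2
    + (Real.sqrt 2 / 3) * pd 6 (fun y => pd 6 (fun z => pd 6 q₃16 z) y) x * (x 3) ^ 3
    + (pd 6 (fun y => pd 6 q₂bar16 y) x - pd 5 (fun y => pd 6 q₃16 y) x) * (x 3) ^ 2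
    + (1 / Real.sqrt 2) * pd 4 q₃16 x * x 3

/-!
The coordinate partial derivative `pd i` is linear and obeys the Leibniz rule on functions
differentiable at the point, with `pd i (fun y => y j) = δᵢⱼ`. Hence on polynomials it is the
formal partial derivative, and each of `q₂, r₅, r₆, r₇` collapses to an explicit polynomial once
the derivatives of `q₃ = (x₅ + x₆ + x₇) x₇` and `q̄₂ = 2 x₆ x₇` are inserted. The differential system
is then a list of identities between polynomials with coefficients in `ℚ(√2)`, which hold
because `√2 ^ 2 = 2`.
-/

section PartialDerivative

variable {n : ℕ} (i : Fin n) {f g : (Fin n → ℝ) → ℝ} {x : Fin n → ℝ}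

theorem pd_const (c : ℝ) : pd i (fun _ => c) x = 0 := by
  simp [pd]

theorem pd_apply_self : pd i (fun y => y i) x = 1 := by
  simp [pd, fderiv_apply]

theorem pd_apply_of_ne {j : Fin n} (h : j ≠ i) : pd i (fun y => y j) x = 0 := by
  simp [pd, fderiv_apply, h]

theorem pd_add (hf : DifferentiableAt ℝ f x) (hg : DifferentiableAt ℝ g x) :
    pd i (fun y => f y + g y) x = pd i f x + pd i g x := by
  simp [pd, fderiv_fun_add hf hg]

theorem pd_sub (hf : DifferentiableAt ℝ f x) (hg : DifferentiableAt ℝ g x) :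
    pd i (fun y => f y - g y) x = pd i f x - pd i g x := by
  simp [pd, fderiv_fun_sub hf hg]

theorem pd_neg : pd i (fun y => -f y) x = -pd i f x := by
  simp [pd, fderiv_fun_neg]

theorem pd_mul (hf : DifferentiableAt ℝ f x) (hg : DifferentiableAt ℝ g x) :
    pd i (fun y => f y * g y) x = pd i f x * g x + f x * pd i g x := by
  simp only [pd, fderiv_fun_mul hf hg, add_apply,
    smul_apply, smul_eq_mul]
  ring

theorem pd_pow (hf : DifferentiableAt ℝ f x) (k : ℕ) :
    pd i (fun y => f y ^ k) x = k * f x ^ (k - 1) * pd i f x := by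
  simp [pd, fderiv_fun_pow k hf]

end PartialDerivative

theorem pd_six_q₃16 (x : Fin 7 → ℝ) : pd 6 q₃16 x = x 4 + x 5 + 2 * x 6 := by
  unfold q₃16
  simp (disch := first | fun_prop | decide) only [pd_add, pd_mul, pd_apply_self, pd_apply_of_ne]
  ring

theorem pd_four_q₃16 (x : Fin 7 → ℝ) : pd 4 q₃16 x = x 6 := by
  unfold q₃16
  simp (disch := first | fun_prop | decide) only [pd_add, pd_mul, pd_apply_self, pd_apply_of_ne]
  ring

theorem pd_six_q₂bar16 (x : Fin 7 → ℝ) : pd 6 q₂bar16 x = 2 * x 5 := by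
  unfold q₂bar16
  simp (disch := first | fun_prop | decide) only [pd_mul, pd_const, pd_apply_self,
    pd_apply_of_ne]
  ring

theorem q₂16_eq : q₂16 = fun x : Fin 7 → ℝ =>
    Real.sqrt 2 * (x 4 + x 5 + 2 * x 6) * x 3 + 2 * x 5 * x 6 := by
  funext x
  rw [q₂16, pd_six_q₃16, q₂bar16]

theorem r₅16_eq : r₅16 = fun x : Fin 7 → ℝ =>
    -(x 4 + x 5 + 2 * x 6) * x 1 + 2 * Real.sqrt 2 * x 2 * x 3
      + 2 * x 2 * x 5 - (x 3) ^ 2 + (1 / Real.sqrt 2) * x 3 * x 6 := by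
  funext x
  simp (disch := first | fun_prop | decide) only [r₅16, pd_six_q₃16, pd_four_q₃16,
    pd_six_q₂bar16, pd_add, pd_mul, pd_const, pd_apply_self, pd_apply_of_ne]
  ring

theorem r₆16_eq : r₆16 = fun x : Fin 7 → ℝ =>
    2 * (x 4 + x 5 + 2 * x 6) * x 2 + 4 * (x 3) ^ 2 + 4 * Real.sqrt 2 * x 3 * x 5 := by
  funext x
  simp (disch := first | fun_prop | decide) only [r₆16, pd_six_q₃16, pd_six_q₂bar16, pd_add,
    pd_mul, pd_const, pd_apply_self, pd_apply_of_ne]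
  ring

theorem r₇16_eq : r₇16 = fun x : Fin 7 → ℝ =>
    2 * Real.sqrt 2 * (x 4 + x 5 + 2 * x 6) * x 3 := by
  funext x
  rw [r₇16, pd_six_q₃16]

end

theorem explicit_solution_type_I_4b_j1 :
    -- the explicit polynomial forms
    (∀ x : Fin 7 → ℝ, q₂16 x = Real.sqrt 2 * (x 4 + x 5 + 2 * x 6) * x 3 + 2 * x 5 * x 6) ∧
    (∀ x : Fin 7 → ℝ, r₅16 x = -(x 4 + x 5 + 2 * x 6) * x 1 + 2 * Real.sqrt 2 * x 2 * x 3
      + 2 * x 2 * x 5 - (x 3) ^ 2 + (1 / Real.sqrt 2) * x 3 * x 6) ∧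
    (∀ x : Fin 7 → ℝ, r₆16 x = 2 * (x 4 + x 5 + 2 * x 6) * x 2 + 4 * (x 3) ^ 2
      + 4 * Real.sqrt 2 * x 3 * x 5) ∧
    (∀ x : Fin 7 → ℝ, r₇16 x = 2 * Real.sqrt 2 * (x 4 + x 5 + 2 * x 6) * x 3) ∧
    -- the differential system of Type I 4(b), j = 1
    (∀ x, -2 * Real.sqrt 2 * pd 1 r₅16 x = Real.sqrt 2 * pd 2 r₆16 x) ∧
    (∀ x, Real.sqrt 2 * pd 2 r₆16 x = pd 3 r₇16 x) ∧
    (∀ x, 2 * Real.sqrt 2 * pd 2 r₅16 x = pd 3 r₆16 x) ∧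
    (∀ x, pd 2 r₆16 x = Real.sqrt 2 * pd 3 q₂16 x) ∧
    (∀ x, Real.sqrt 2 * pd 3 r₅16 x = pd 6 r₆16 x - pd 5 r₇16 x + pd 4 q₃16 x) ∧
    (∀ x, pd 3 r₆16 x = 2 * Real.sqrt 2 * pd 6 q₂16 x) ∧
    (∀ x, pd 3 r₇16 x = 2 * Real.sqrt 2 * pd 6 q₃16 x) := by
  have sqrt_two_sq : Real.sqrt 2 ^ 2 = 2 := Real.sq_sqrt zero_le_two
  refine ⟨congrFun q₂16_eq, congrFun r₅16_eq, congrFun r₆16_eq, congrFun r₇16_eq,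
    ?_, ?_, ?_, ?_, ?_, ?_, ?_⟩ <;> intro x <;>
    simp (disch := first | fun_prop | decide) only [pd_six_q₃16, pd_four_q₃16, q₂16_eq,
      r₅16_eq, r₆16_eq, r₇16_eq, pd_add, pd_sub, pd_neg, pd_mul, pd_pow, pd_const,
      pd_apply_self, pd_apply_of_ne] <;>
    grind
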